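/- Consider F = f + g where f has an L-Lipschitz continuous gradient, g is convex, F attains its minimum F*, and F satisfies the proximal-PL inequality (1/2)D_g(x, L) ≥ μ(F(x) − F*) for some μ > 0, where D_g(x, L) = −2L min_y [⟨∇f(x), y−x⟩ + (L/2)‖y−x‖² + g(y) − g(x)]. Then the proximal-gradient iterates x_{k+1} = argmin_y [⟨∇f(x_k), y−x_k⟩ + (L/2)‖y−x_k‖² + g(y) − g(x_k)] satisfy F(x_k) − F* ≤ (1 − μ/L)^k (F(x_0) − F*). -/
import Mathlib


open RealInnerProductSpace

/-- The quantity `D_g(x, λ)` from the proximal-PL inequality. -/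
noncomputable def Dg {d : ℕ} (f g : EuclideanSpace ℝ (Fin d) → ℝ)
    (x : EuclideanSpace ℝ (Fin d)) (lam : ℝ) : ℝ :=
  -2 * lam * ⨅ y : EuclideanSpace ℝ (Fin d),
    (⟪gradient f x, y - x⟫ + lam / 2 * ‖y - x‖ ^ 2 + g y - g x)

theorem proximal_gradient_linear_convergence_proxPL
    {d : ℕ} (f g : EuclideanSpace ℝ (Fin d) → ℝ) (L μ Fstar : ℝ)
    (hL : 0 < L) (hμ : 0 < μ) (hμL : μ ≤ L)
    (hdiff : Differentiable ℝ f) (hconv : ConvexOn ℝ Set.univ g)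
    (hlip : ∀ x y, f y ≤ f x + ⟪gradient f x, y - x⟫ + L / 2 * ‖y - x‖ ^ 2)
    (hmin : ∃ z, f z + g z = Fstar ∧ ∀ y, Fstar ≤ f y + g y)
    (hproxPL : ∀ x, μ * (f x + g x - Fstar) ≤ 1 / 2 * Dg f g x L)
    (x : ℕ → EuclideanSpace ℝ (Fin d))
    (hx : ∀ k, IsMinOn
      (fun y => ⟪gradient f (x k), y - x k⟫ + L / 2 * ‖y - x k‖ ^ 2 + g y - g (x k))
      Set.univ (x (k + 1))) :
    ∀ k, f (x k) + g (x k) - Fstar ≤ (1 - μ / L) ^ k * (f (x 0) + g (x 0) - Fstar) := by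
  obtain ⟨z, hz, hFstar⟩ := hmin
  have hstep : ∀ k, f (x (k+1)) + g (x (k+1)) - Fstar ≤
      (1 - μ / L) * (f (x k) + g (x k) - Fstar) := by
    intro k
    have hmem : ∀ y, (fun y => ⟪gradient f (x k), y - x k⟫ + L / 2 * ‖y - x k‖ ^ 2 + g y - g (x k)) (x (k+1)) ≤
        ⟪gradient f (x k), y - x k⟫ + L / 2 * ‖y - x k‖ ^ 2 + g y - g (x k) :=
      fun y => (isMinOn_iff.mp (hx k)) y (Set.mem_univ y)
    set Qv : ℝ := ⟪gradient f (x k), x (k+1) - x k⟫ + L / 2 * ‖x (k+1) - x k‖ ^ 2 + g (x (k+1)) - g (x k) with hQv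
    clear_value Qv
    have hmem' : ∀ y, Qv ≤ ⟪gradient f (x k), y - x k⟫ + L / 2 * ‖y - x k‖ ^ 2 + g y - g (x k) := by
      intro y; rw [hQv]; exact hmem y
    have hinf : (⨅ y : EuclideanSpace ℝ (Fin d),
        (⟪gradient f (x k), y - x k⟫ + L / 2 * ‖y - x k‖ ^ 2 + g y - g (x k))) = Qv := by
      apply le_antisymm
      · rw [hQv]
        exact ciInf_le ⟨Qv, by rintro a ⟨y, rfl⟩; exact hmem' y⟩ (x (k+1))
      · exact le_ciInf hmem'
    have hPL := hproxPL (x k)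
    rw [Dg, hinf] at hPL
    have hdesc : f (x (k+1)) + g (x (k+1)) ≤ f (x k) + g (x k) + Qv := by
      have := hlip (x k) (x (k+1))
      rw [hQv]; linarith
    have hQle : Qv ≤ -(μ / L) * (f (x k) + g (x k) - Fstar) := by
      rw [neg_mul, le_neg, div_mul_eq_mul_div, div_le_iff₀ hL]
      ring_nf at hPL ⊢
      linarith
    have hring : (1 - μ / L) * (f (x k) + g (x k) - Fstar) =
        (f (x k) + g (x k) - Fstar) - μ / L * (f (x k) + g (x k) - Fstar) := by ring
    rw [hring]
    have hQle' : Qv ≤ -(μ / L * (f (x k) + g (x k) - Fstar)) := by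
      rw [← neg_mul]; exact hQle
    linarith
  intro k
  induction k with
  | zero => simp
  | succ n ih =>
    have h1 : (0:ℝ) ≤ 1 - μ / L := by
      have : μ / L ≤ 1 := (div_le_one hL).mpr hμL
      linarith
    calc f (x (n+1)) + g (x (n+1)) - Fstar ≤ (1 - μ / L) * (f (x n) + g (x n) - Fstar) := hstep n
      _ ≤ (1 - μ / L) * ((1 - μ / L) ^ n * (f (x 0) + g (x 0) - Fstar)) :=
          mul_le_mul_of_nonneg_left ih h1
      _ = (1 - μ / L) ^ (n+1) * (f (x 0) + g (x 0) - Fstar) := by ring
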